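/- arXiv:2311.18528 — 4 statements merged into one kernel-verified Lean document; each statement's English description precedes it below -/
import Mathlib

section
/- Let X and Y be inhabited types, f : X → Y and g : List Y → Y. For every n : ℕ and every list xs : List X with length xs = n + 1, the top-down algorithm equals the bottom-up algorithm: td n xs = unT (((mapB g ∘ up)^[n]) (mapB ex (ch 1 (List.map f xs)))), where (·)^[n] denotes n-fold iteration of a function. -/
def subs {α : Type} : List α → List (List α)
  | [] => []
  | x :: xs => (subs xs).map (x :: ·) ++ [xs]

def choose {α : Type} : ℕ → List α → List (List α)
  | 0, _ => [[]]
  | k+1, xs =>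
    if k + 1 = xs.length then [xs]
    else
      match xs with
      | [] => []
      | x :: xs' => (choose k xs').map (x :: ·) ++ choose (k+1) xs'

inductive B (α : Type) : Type
  | T : α → B α
  | N : B α → B α → B α

def mapB {α β : Type} (f : α → β) : B α → B β
  | .T a => .T (f a)
  | .N t u => .N (mapB f t) (mapB f u)

def zipBW {α β γ : Type} (f : α → β → γ) : B α → B β → B γ
  | .T a, .T b => .T (f a b)
  | .N t u, .N t' u' => .N (zipBW f t t') (zipBW f u u')
  | .T a, v => mapB (f a) v
  | v, .T b => mapB (f · b) v

def ch {α : Type} : ℕ → List α → B (List α)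
  | 0, _ => .T []
  | k+1, xs =>
    if k + 1 = xs.length then .T xs
    else
      match xs with
      | [] => .T []
      | x :: xs' => .N (mapB (x :: ·) (ch k xs')) (ch (k+1) xs')

def snoc {α : Type} (ys : List α) (z : α) : List α := ys ++ [z]

def unT {α : Type} [Inhabited α] : B α → α
  | .T p => p
  | .N _ _ => default

def up {α : Type} : B α → B (List α)
  | .N (.T p) (.T q) => .T [p, q]
  | .N t (.T q) => .T (unT (up t) ++ [q])
  | .N (.T p) u => .N (mapB (fun q => [p, q]) u) (up u)
  | .N t u => .N (zipBW snoc (up t) u) (up u)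
  | .T p => .T [p]

def ex {α : Type} [Inhabited α] : List α → α
  | [x] => x
  | _ => default

def td {X Y : Type} [Inhabited X] [Inhabited Y] (f : X → Y) (g : List Y → Y) : ℕ → List X → Y
  | 0, xs => f (ex xs)
  | n+1, xs => g ((subs xs).map (td f g n))

def td' {Y : Type} [Inhabited Y] (g : List Y → Y) : ℕ → List Y → Y
  | 0, xs => ex xs
  | n+1, xs => g ((subs xs).map (td' g n))


/- ## Auxiliary lemmas -/

lemma up_T {α : Type} (p : α) : up (B.T p) = B.T [p] := rfl
lemma up_TT {α : Type} (p q : α) : up (B.N (B.T p) (B.T q)) = B.T [p, q] := rfl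
lemma up_NT {α : Type} (a b : B α) (q : α) :
    up (B.N (B.N a b) (B.T q)) = B.T (unT (up (B.N a b)) ++ [q]) := rfl
lemma up_TN {α : Type} (p : α) (c d : B α) :
    up (B.N (B.T p) (B.N c d)) = B.N (mapB (fun q => [p, q]) (B.N c d)) (up (B.N c d)) := rfl
lemma up_NN {α : Type} (a b c d : B α) :
    up (B.N (B.N a b) (B.N c d)) = B.N (zipBW snoc (up (B.N a b)) (B.N c d)) (up (B.N c d)) := rfl

lemma mapB_comp {α β γ : Type} (f : β → γ) (g : α → β) (t : B α) :
    mapB f (mapB g t) = mapB (fun a => f (g a)) t := by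
  induction t with
  | T a => rfl
  | N l r ihl ihr => simp [mapB, ihl, ihr]

def allB {α : Type} (P : α → Prop) : B α → Prop
  | .T a => P a
  | .N t u => allB P t ∧ allB P u

lemma mapB_congr {α β : Type} {P : α → Prop} {f g : α → β} {t : B α}
    (ht : allB P t) (h : ∀ a, P a → f a = g a) : mapB f t = mapB g t := by
  induction t with
  | T a => simp [mapB, h a ht]
  | N l r ihl ihr => exact congrArg₂ B.N (ihl ht.1) (ihr ht.2)

lemma unT_mapB_map {α β : Type} (h : α → β) (t : B (List α)) :
    unT (mapB (List.map h) t) = List.map h (unT t) := by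
  cases t with
  | T a => rfl
  | N l r => simp [mapB, unT]; rfl

lemma zipBW_mapB {α β α' β' γ γ' : Type} (f : α' → β' → γ) (f' : α → β → γ')
    (p : α → α') (q : β → β') (r : γ' → γ)
    (h : ∀ x y, f (p x) (q y) = r (f' x y)) (a : B α) (b : B β) :
    zipBW f (mapB p a) (mapB q b) = mapB r (zipBW f' a b) := by
  induction a generalizing b with
  | T x =>
    cases b with
    | T y => simp [mapB, zipBW, h]
    | N c d => simp [mapB, zipBW, mapB_comp, h]
  | N a1 a2 ih1 ih2 =>
    cases b with
    | T y => simp [mapB, zipBW, mapB_comp, h]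
    | N c d => simp [mapB, zipBW, ih1, ih2]

lemma zipBW_same {α α' γ : Type} (f : α' → α → γ) (p : α → α') (t : B α) :
    zipBW f (mapB p t) t = mapB (fun a => f (p a) a) t := by
  induction t with
  | T a => rfl
  | N l r ihl ihr => simp [mapB, zipBW, ihl, ihr]

lemma up_natural {α β : Type} (h : α → β) (t : B α) :
    up (mapB h t) = mapB (List.map h) (up t) := by
  induction t with
  | T p => rfl
  | N l r ihl ihr =>
    cases l with
    | T p =>
      cases r with
      | T q => rfl
      | N c d =>
        have e : mapB h (B.N c d) = B.N (mapB h c) (mapB h d) := rfl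
        show up (B.N (B.T (h p)) (mapB h (B.N c d))) = _
        rw [e, up_TN, ← e, ihr, up_TN]
        show B.N (mapB (fun q => [h p, q]) (mapB h (B.N c d))) _ =
          B.N (mapB (List.map h) (mapB (fun q => [p, q]) (B.N c d))) _
        rw [mapB_comp, mapB_comp]
        rfl
    | N a b =>
      have e : mapB h (B.N a b) = B.N (mapB h a) (mapB h b) := rfl
      cases r with
      | T q =>
        show up (B.N (mapB h (B.N a b)) (B.T (h q))) = _
        rw [e, up_NT, ← e, ihl, up_NT, unT_mapB_map]
        show B.T _ = B.T _
        simp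
      | N c d =>
        have e2 : mapB h (B.N c d) = B.N (mapB h c) (mapB h d) := rfl
        show up (B.N (mapB h (B.N a b)) (mapB h (B.N c d))) = _
        rw [e, e2, up_NN, ← e, ← e2, ihl, ihr]
        show _ = B.N (mapB (List.map h) (zipBW snoc (up (B.N a b)) (B.N c d)))
          (mapB (List.map h) (up (B.N c d)))
        congr 1
        exact zipBW_mapB snoc snoc (List.map h) h (List.map h)
          (fun x y => by simp [snoc]) (up (B.N a b)) (B.N c d)

lemma ch_zero {α : Type} (xs : List α) : ch 0 xs = B.T [] := by simp [ch]

lemma ch_top {α : Type} (k : ℕ) (xs : List α) (h : k + 1 = xs.length) :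
    ch (k+1) xs = B.T xs := by
  rw [ch.eq_def]; simp [h]

lemma allB_N {α : Type} (P : α → Prop) (t u : B α) :
    allB P (B.N t u) ↔ allB P t ∧ allB P u := Iff.rfl

lemma allB_T {α : Type} (P : α → Prop) (a : α) : allB P (B.T a) ↔ P a := Iff.rfl

lemma ch_cons {α : Type} (k : ℕ) (x : α) (xs' : List α) (h : k ≠ xs'.length) :
    ch (k+1) (x :: xs') = B.N (mapB (x :: ·) (ch k xs')) (ch (k+1) xs') := by
  simp [ch, h]

lemma ch_shape {α : Type} (k : ℕ) (xs : List α) (h1 : 1 ≤ k) (h2 : k < xs.length) :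
    ∃ a b, ch k xs = B.N a b := by
  obtain ⟨m, rfl⟩ : ∃ m, k = m + 1 := ⟨k - 1, by omega⟩
  cases xs with
  | nil => simp at h2
  | cons x xs' =>
    rw [ch_cons m x xs' (by simp only [List.length_cons] at h2; omega)]
    exact ⟨_, _, rfl⟩

lemma subs_map {α β : Type} (f : α → β) (xs : List α) :
    subs (List.map f xs) = List.map (List.map f) (subs xs) := by
  induction xs with
  | nil => rfl
  | cons x xs ih => simp [subs, ih, List.map_map]

lemma subs_mem_length {α : Type} {xs ys : List α} (h : ys ∈ subs xs) :
    ys.length + 1 = xs.length := by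
  induction xs generalizing ys with
  | nil => simp [subs] at h
  | cons x xs ih =>
    simp [subs] at h
    rcases h with ⟨zs, hz, rfl⟩ | rfl
    · simp [ih hz]
    · rfl

lemma ch_one_singleton {α : Type} (ys : List α) (h : 1 ≤ ys.length) :
    allB (fun q => ∃ a, q = [a]) (ch 1 ys) := by
  induction ys with
  | nil => simp at h
  | cons y ys' ih =>
    by_cases h1 : ys' = []
    · subst h1
      rw [show (1:ℕ) = 0 + 1 from rfl, ch_top 0 [y] rfl, allB_T]
      exact ⟨y, rfl⟩
    · rw [show (1:ℕ) = 0 + 1 from rfl,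
        ch_cons 0 y ys' (fun hc => h1 (List.eq_nil_of_length_eq_zero hc.symm)), allB_N]
      refine ⟨?_, ih ?_⟩
      · rw [ch_zero, show mapB (y :: ·) (B.T ([]:List α)) = B.T [y] from rfl, allB_T]
        exact ⟨y, rfl⟩
      · cases ys' with
        | nil => exact absurd rfl h1
        | cons a b => simp

/- ## The key lemma -/

lemma up_ch {α : Type} (k : ℕ) (xs : List α) (h1 : 1 ≤ k) (h2 : k < xs.length) :
    up (ch k xs) = mapB subs (ch (k+1) xs) := by
  induction xs generalizing k with
  | nil => simp at h2
  | cons x xs' ih =>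
    obtain ⟨m, rfl⟩ : ∃ m, k = m + 1 := ⟨k - 1, by omega⟩
    have hlen : m + 1 ≤ xs'.length := by simp only [List.length_cons] at h2; omega
    rw [ch_cons m x xs' (by omega)]
    by_cases htop : m + 1 = xs'.length
    · rw [ch_top (m+1) (x :: xs') (by simp [htop])]
      rcases Nat.eq_zero_or_pos m with hm | hm
      · subst hm
        obtain ⟨y, rfl⟩ : ∃ y, xs' = [y] := by
          cases xs' with
          | nil => simp at htop
          | cons a b =>
            cases b with
            | nil => exact ⟨a, rfl⟩
            | cons c d => simp at htop
        rw [ch_zero, ch_top 0 [y] rfl]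
        show B.T [[x], [y]] = B.T (subs [x, y])
        simp [subs]
      · obtain ⟨a, b, hab⟩ := ch_shape m xs' hm (by omega)
        rw [ch_top m xs' htop, hab,
          show mapB (x :: ·) (B.N a b) = B.N (mapB (x :: ·) a) (mapB (x :: ·) b) from rfl,
          up_NT,
          show B.N (mapB (x :: ·) a) (mapB (x :: ·) b) = mapB (x :: ·) (B.N a b) from rfl,
          ← hab, up_natural, ih m hm (by omega), ch_top m xs' htop]
        show B.T (unT (mapB (List.map (x :: ·)) (B.T (subs xs'))) ++ [xs']) = B.T (subs (x :: xs'))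
        rw [show mapB (List.map (x :: ·)) (B.T (subs xs')) = B.T (List.map (x :: ·) (subs xs')) from rfl]
        show B.T (List.map (x :: ·) (subs xs') ++ [xs']) = B.T (subs (x :: xs'))
        simp [subs]
    · have hlt : m + 1 < xs'.length := by omega
      rw [ch_cons (m+1) x xs' (by omega),
        show mapB subs (B.N (mapB (x :: ·) (ch (m+1) xs')) (ch (m+1+1) xs')) =
          B.N (mapB subs (mapB (x :: ·) (ch (m+1) xs'))) (mapB subs (ch (m+1+1) xs')) from rfl]
      have ihk : up (ch (m+1) xs') = mapB subs (ch (m+1+1) xs') := ih (m+1) h1 hlt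
      obtain ⟨c, d, hcd⟩ := ch_shape (m+1) xs' h1 hlt
      rcases Nat.eq_zero_or_pos m with hm | hm
      · subst hm
        rw [ch_zero, show mapB (x :: ·) (B.T ([] : List α)) = B.T [x] from rfl,
          hcd, up_TN, ← hcd, ihk]
        congr 1
        rw [mapB_comp]
        apply mapB_congr (ch_one_singleton xs' (by omega))
        rintro q ⟨a, rfl⟩
        simp [subs]
      · obtain ⟨a, b, hab⟩ := ch_shape m xs' hm (by omega)
        rw [hab,
          show mapB (x :: ·) (B.N a b) = B.N (mapB (x :: ·) a) (mapB (x :: ·) b) from rfl,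
          hcd, up_NN,
          show B.N (mapB (x :: ·) a) (mapB (x :: ·) b) = mapB (x :: ·) (B.N a b) from rfl,
          ← hab, ← hcd, up_natural, ih m hm (by omega), mapB_comp, zipBW_same, ihk]
        congr 1
        rw [mapB_comp]
        have : (fun zs : List α => snoc (List.map (x :: ·) (subs zs)) zs) =
            fun zs => subs (x :: zs) := by
          funext zs
          simp [subs, snoc]
        rw [this]

/- ## Assembly -/

lemma td_eq_td' {X Y : Type} [Inhabited X] [Inhabited Y] (f : X → Y) (g : List Y → Y) :
    ∀ (n : ℕ) (xs : List X), xs.length = n + 1 → td f g n xs = td' g n (List.map f xs) := by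
  intro n
  induction n with
  | zero =>
    intro xs hx
    obtain ⟨a, rfl⟩ : ∃ a, xs = [a] := by
      cases xs with
      | nil => simp at hx
      | cons a b =>
        cases b with
        | nil => exact ⟨a, rfl⟩
        | cons c d => simp at hx
    rfl
  | succ n ih =>
    intro xs hx
    show g (List.map (td f g n) (subs xs)) = g (List.map (td' g n) (subs (List.map f xs)))
    rw [subs_map, List.map_map]
    congr 1
    apply List.map_congr_left
    intro ys hy
    have := subs_mem_length hy
    exact ih ys (by omega)

lemma iter_ch {Y : Type} [Inhabited Y] (g : List Y → Y) (n : ℕ) (ys : List Y)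
    (h : ys.length = n + 1) :
    ∀ j, j ≤ n → (mapB g ∘ up)^[j] (mapB (td' g 0) (ch 1 ys)) = mapB (td' g j) (ch (j+1) ys) := by
  intro j
  induction j with
  | zero => intro _; rfl
  | succ j ihj =>
    intro hj
    rw [Function.iterate_succ_apply', ihj (by omega), Function.comp_apply, up_natural,
      up_ch (j+1) ys (by omega) (by omega), mapB_comp, mapB_comp]
    rfl

theorem stmt0 {X Y : Type} [Inhabited X] [Inhabited Y] (f : X → Y) (g : List Y → Y)
    (n : ℕ) (xs : List X) (h : xs.length = n + 1) :
    td f g n xs = unT ((mapB g ∘ up)^[n] (mapB ex (ch 1 (List.map f xs)))) := by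
  have hys : (List.map f xs).length = n + 1 := by simpa using h
  rw [td_eq_td' f g n xs h,
    show (mapB ex : B (List Y) → B Y) = mapB (td' g 0) from rfl,
    iter_ch g n (List.map f xs) hys n le_rfl, ch_top n (List.map f xs) hys.symm]
  rfl
end

section
/- For every type α and every nonempty list xs : List α, subs xs = choose (length xs - 1) xs; that is, taking immediate sublists is the special case of choosing length xs - 1 elements from xs. -/
lemma choose_full {α : Type} (xs : List α) : choose xs.length xs = [xs] := by
  cases xs with
  | nil => rfl
  | cons x xs => simp [choose]

theorem stmt4 {α : Type} (xs : List α) (h : xs ≠ []) :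
    subs xs = choose (xs.length - 1) xs := by
  induction xs with
  | nil => exact absurd rfl h
  | cons x xs ih =>
    cases xs with
    | nil => rfl
    | cons y ys =>
      have ihe := ih (by simp)
      simp only [List.length_cons, Nat.add_sub_cancel] at ihe ⊢
      rw [subs, choose]
      simp only [List.length_cons]
      rw [if_neg (by omega)]
      rw [← ihe]
      have : ys.length + 1 = (y :: ys).length := by simp
      rw [this, choose_full]
end

section
/- For every element x : α and every tree u : B (List α), mapB (fun ys => subs (x :: ys)) u = zipBW snoc (mapB (fun ys => List.map (x :: ·) (subs ys)) u) u. -/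
theorem stmt8 {α : Type} (x : α) (u : B (List α)) :
    mapB (fun ys => subs (x :: ys)) u
      = zipBW snoc (mapB (fun ys => List.map (x :: ·) (subs ys)) u) u := by
  induction u with
  | T a => simp [mapB, zipBW, subs, snoc]
  | N t u iht ihu => simp [mapB, zipBW, iht, ihu]
end

section
/- Suppose upgrade : ∀ {β : Type}, List β → List (List β) is natural, i.e. upgrade (List.map φ ys) = List.map (List.map φ) (upgrade ys) for all φ : β → γ and ys : List β, and suppose that for all lists xs and all k with 1 ≤ k < length xs one has upgrade (choose k xs) = List.map subs (choose (1+k) xs). Let h : List X → Y and g : List Y → Y satisfy h ys = g (List.map h (subs ys)) for every ys with 2 ≤ length ys. Then for every xs : List X and every k with 1 ≤ k < length xs, List.map g (upgrade (List.map h (choose k xs))) = List.map h (choose (k+1) xs). -/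
lemma choose_mem_length {α : Type} : ∀ (xs : List α) (k : ℕ), k ≤ xs.length →
    ∀ ys ∈ choose k xs, ys.length = k := by
  intro xs
  induction xs with
  | nil => intro k hk ys hys
           have : k = 0 := by simpa using hk
           subst this
           simp [choose] at hys; simp [hys]
  | cons x xs' ih =>
    intro k hk ys hys
    match k with
    | 0 => simp [choose] at hys; simp [hys]
    | k+1 =>
      rw [choose] at hys
      split at hys
      · next heq => simp at hys; subst hys; omega
      · next hne =>
        simp at hys
        rcases hys with ⟨zs, hzs, rfl⟩ | hys
        · simp [ih k (by simp at hk; omega) zs hzs]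
        · exact ih (k+1) (by simp at hk hne ⊢; omega) ys hys

theorem stmt10 {X Y : Type}
    (upgrade : ∀ {β : Type}, List β → List (List β))
    (hnat : ∀ {β γ : Type} (φ : β → γ) (ys : List β),
      upgrade (List.map φ ys) = List.map (List.map φ) (upgrade ys))
    (hspec : ∀ {β : Type} (xs : List β) (k : ℕ), 1 ≤ k → k < xs.length →
      upgrade (choose k xs) = List.map subs (choose (1 + k) xs))
    (h : List X → Y) (g : List Y → Y)
    (hg : ∀ ys : List X, 2 ≤ ys.length → h ys = g (List.map h (subs ys)))
    (xs : List X) (k : ℕ) (hk1 : 1 ≤ k) (hk2 : k < xs.length) :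
    List.map g (upgrade (List.map h (choose k xs))) = List.map h (choose (k + 1) xs) := by
  rw [hnat, hspec xs k hk1 hk2, List.map_map, List.map_map]
  rw [show k + 1 = 1 + k from Nat.add_comm k 1]
  apply List.map_congr_left
  intro ys hys
  have hlen : ys.length = 1 + k := choose_mem_length xs (1+k) (by omega) ys hys
  simp only [Function.comp]
  rw [← hg ys (by omega)]
end
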